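/- In any MLL proof net Θ, if L is a ⊗-link with premises A and B, then the empires e_Θ(A) and e_Θ(B) are disjoint sets of formula occurrences. -/

import Mathlib

/-- An MLL link: an ID-link (axiom link) with two conclusions,
a tensor link or a par link with two premises and one conclusion. -/
inductive MLLLink (V : Type) where
  | idl (c₁ c₂ : V)
  | tensor (a b c : V)
  | par (a b c : V)
deriving DecidableEq

namespace MLLLink
variable {V V' : Type}

def prems : MLLLink V → List V
  | idl _ _ => []
  | tensor a b _ => [a, b]
  | par a b _ => [a, b]

def concls : MLLLink V → List V
  | idl c₁ c₂ => [c₁, c₂]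
  | tensor _ _ c => [c]
  | par _ _ c => [c]

def isId : MLLLink V → Bool
  | idl _ _ => true
  | _ => false

def isTensor : MLLLink V → Bool
  | tensor _ _ _ => true
  | _ => false

def isPar : MLLLink V → Bool
  | par _ _ _ => true
  | _ => false

/-- Relabel the vertices of a link along a map. -/
def map (f : V → V') : MLLLink V → MLLLink V'
  | idl c₁ c₂ => idl (f c₁) (f c₂)
  | tensor a b c => tensor (f a) (f b) (f c)
  | par a b c => par (f a) (f b) (f c)

/-- Forget whether a multiplicative link is ⊗ or ⅋ (normalizing ⅋ to ⊗). -/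
def forget : MLLLink V → MLLLink V
  | par a b c => tensor a b c
  | L => L

end MLLLink

/-- An MLL proof structure on the set `V` of formula occurrences:
every occurrence is the conclusion of exactly one link and the premise of
at most one link, and the occurrences appearing in a link are distinct. -/
structure MLLProofStructure (V : Type) [DecidableEq V] where
  links : Finset (MLLLink V)
  concl_exists : ∀ v : V, ∃ L ∈ links, v ∈ L.concls
  concl_unique : ∀ v : V, ∀ L ∈ links, ∀ L' ∈ links,
      v ∈ L.concls → v ∈ L'.concls → L = L'
  prem_unique : ∀ v : V, ∀ L ∈ links, ∀ L' ∈ links,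
      v ∈ L.prems → v ∈ L'.prems → L = L'
  nodup : ∀ L ∈ links, (L.prems ++ L.concls).Nodup

variable {V : Type} [DecidableEq V]

/-- The edge generated by a link under a DR-switching `S`
(`S L = true` selects the left premise of a ⅋-link). -/
def switchEdge (S : MLLLink V → Bool) (L : MLLLink V) (v w : V) : Prop :=
  match L with
  | .idl c₁ c₂ => v = c₁ ∧ w = c₂
  | .tensor a b c => (v = a ∧ w = c) ∨ (v = b ∧ w = c)
  | .par a b c =>
      (S (.par a b c) = true ∧ v = a ∧ w = c) ∨
      (S (.par a b c) = false ∧ v = b ∧ w = c)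

def drRel (Θ : MLLProofStructure V) (S : MLLLink V → Bool) (v w : V) : Prop :=
  ∃ L ∈ Θ.links, switchEdge S L v w

/-- The Danos–Regnier graph of a proof structure under a switching. -/
def drGraph (Θ : MLLProofStructure V) (S : MLLLink V → Bool) : SimpleGraph V :=
  SimpleGraph.fromRel (drRel Θ S)

/-- Danos–Regnier criterion: a proof net is a proof structure all of whose
DR-graphs are acyclic and connected. -/
def IsProofNet (Θ : MLLProofStructure V) : Prop :=
  ∀ S : MLLLink V → Bool, (drGraph Θ S).IsAcyclic ∧ (drGraph Θ S).Connected

/-- The edges from `A` down to the conclusion of the link of which `A` is a premise. -/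
def belowEdges (Θ : MLLProofStructure V) (A : V) : Set (Sym2 V) :=
  {e | ∃ L ∈ Θ.links, A ∈ L.prems ∧ ∃ c ∈ L.concls, e = s(A, c)}

/-- The DR-graph with the edge below `A` deleted. -/
def empGraph (Θ : MLLProofStructure V) (S : MLLLink V → Bool) (A : V) : SimpleGraph V :=
  (drGraph Θ S).deleteEdges (belowEdges Θ A)

/-- The vertex set of `Θ_S^A`: the connected component of `A` in the DR-graph
after deleting the edge below `A`. -/
def empComp (Θ : MLLProofStructure V) (S : MLLLink V → Bool) (A : V) : Set V :=
  {v | (empGraph Θ S A).Reachable A v}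

/-- The empire of `A` in `Θ`. -/
def empire (Θ : MLLProofStructure V) (A : V) : Set V :=
  ⋂ S : MLLLink V → Bool, empComp Θ S A

/-- A conclusion of `Θ` is a formula occurrence which is a premise of no link. -/
def IsConclusion (Θ : MLLProofStructure V) (v : V) : Prop :=
  ∀ L ∈ Θ.links, v ∉ L.prems

/-- All premises and conclusions of a link lie in `X`. -/
def allIn (X : Set V) (L : MLLLink V) : Prop :=
  (∀ w ∈ L.prems, w ∈ X) ∧ (∀ w ∈ L.concls, w ∈ X)

/-- `X` together with the links of `Θ` contained in `X` forms a proof structure. -/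
def IsSubProofStructure (Θ : MLLProofStructure V) (X : Set V) : Prop :=
  ∀ v ∈ X, ∃ L ∈ Θ.links, v ∈ L.concls ∧ allIn X L

def subDrRel (Θ : MLLProofStructure V) (X : Set V) (S : MLLLink V → Bool)
    (v w : V) : Prop :=
  ∃ L ∈ Θ.links, allIn X L ∧ switchEdge S L v w

/-- The DR-graph of the substructure of `Θ` induced on `X`. -/
def subDrGraph (Θ : MLLProofStructure V) (X : Set V) (S : MLLLink V → Bool) :
    SimpleGraph V :=
  SimpleGraph.fromRel (subDrRel Θ X S)

/-- `X` is a sub-proof net of `Θ`: it induces a proof structure whose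
DR-graphs are all acyclic and connected (on `X`). -/
def IsSubProofNet (Θ : MLLProofStructure V) (X : Set V) : Prop :=
  IsSubProofStructure Θ X ∧
    ∀ S : MLLLink V → Bool, (subDrGraph Θ X S).IsAcyclic ∧
      ∀ v ∈ X, ∀ w ∈ X, (subDrGraph Θ X S).Reachable v w

/-- `A` is a conclusion of the substructure induced on `X`. -/
def IsConclusionOfSub (Θ : MLLProofStructure V) (X : Set V) (A : V) : Prop :=
  A ∈ X ∧ ∀ L ∈ Θ.links, allIn X L → A ∉ L.prems

/-- `e` is an isomorphism of the underlying link graphs of `Θ₁` and `Θ₂`,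
forgetting the ⊗/⅋ labels: they witness that `Θ₁` and `Θ₂` are in the same PS-family. -/
def FamilyIso {V₁ V₂ : Type} [DecidableEq V₁] [DecidableEq V₂]
    (Θ₁ : MLLProofStructure V₁) (Θ₂ : MLLProofStructure V₂) (e : V₁ ≃ V₂) : Prop :=
  Θ₁.links.image (fun L => (L.map e).forget) = Θ₂.links.image MLLLink.forget

/-- The number of (multiplicative) links at which the ⊗/⅋-labellings of
`Θ₁` and `Θ₂` differ along `e`. -/
def diffCount {V₁ V₂ : Type} [DecidableEq V₁] [DecidableEq V₂]
    (Θ₁ : MLLProofStructure V₁) (Θ₂ : MLLProofStructure V₂) (e : V₁ ≃ V₂) : ℕ :=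
  (Θ₁.links.filter (fun L => L.map e ∉ Θ₂.links)).card

/-!
Fix any switching `S`. The DR-graph `Θ_S` is acyclic, so its edges `A — C` and `B — C` are bridges.
If `v` lay in both `Θ_S^A` and `Θ_S^B`, a walk from `B` to `v` avoiding `B — C` either passes
through `A`, and then continues along `A — C` to reach `C` without `B — C`, or avoids `A — C`, and
then `A ⇝ v ⇝ B — C` reaches `C` without `A — C`; both contradict the bridge property.
-/

open SimpleGraph Walk in
theorem SimpleGraph.IsAcyclic.disjoint_reachable_deleteEdges {α : Type*} {G : SimpleGraph α}
    (hG : G.IsAcyclic) {a b c : α} (hac : G.Adj a c) (hbc : G.Adj b c) (hab : a ≠ b) :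
    Disjoint {v | (G.deleteEdges {s(a, c)}).Reachable a v}
      {v | (G.deleteEdges {s(b, c)}).Reachable b v} := by
  classical
  have isBridge := isAcyclic_iff_forall_adj_isBridge.mp hG
  have hne : s(a, c) ≠ s(b, c) := by simp [hab, hac.ne]
  rw [Set.disjoint_left]
  rintro v hav hbv
  obtain ⟨q, hq⟩ := reachable_deleteEdges_iff_exists_walk.mp hav
  obtain ⟨p, hp⟩ := reachable_deleteEdges_iff_exists_walk.mp hbv
  by_cases hap : s(a, c) ∈ p.edges
  · have ha := p.fst_mem_support_of_mem_edges hap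
    have hmem := isBridge_iff_forall_walk_mem_edges.mp (isBridge hbc)
      ((p.takeUntil a ha).concat hac)
    rw [edges_concat, List.concat_eq_append, List.mem_append, List.mem_singleton] at hmem
    rcases hmem with h | h
    · exact hp (p.edges_takeUntil_subset_edges ha h)
    · exact hne h.symm
  · have hmem := isBridge_iff_forall_walk_mem_edges.mp (isBridge hac)
      ((q.append p.reverse).concat hbc)
    simp only [edges_concat, edges_append, edges_reverse, List.concat_eq_append, List.mem_append,
      List.mem_singleton, List.mem_reverse] at hmem
    tauto

section

variable {Θ : MLLProofStructure V} {a b c : V}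

lemma MLLProofStructure.ne_of_tensor_mem (hL : .tensor a b c ∈ Θ.links) :
    a ≠ b ∧ a ≠ c ∧ b ≠ c := by
  have hnd := Θ.nodup _ hL
  simp only [MLLLink.prems, MLLLink.concls, List.cons_append, List.nil_append, List.nodup_cons,
    List.mem_cons, List.not_mem_nil, or_false, not_or] at hnd
  exact ⟨hnd.1.1, hnd.1.2, hnd.2.1⟩

lemma drGraph_adj_of_tensor_mem (S : MLLLink V → Bool) (hL : .tensor a b c ∈ Θ.links) :
    (drGraph Θ S).Adj a c ∧ (drGraph Θ S).Adj b c := by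
  obtain ⟨-, hac, hbc⟩ := Θ.ne_of_tensor_mem hL
  exact ⟨⟨hac, .inl ⟨_, hL, .inl ⟨rfl, rfl⟩⟩⟩, ⟨hbc, .inl ⟨_, hL, .inr ⟨rfl, rfl⟩⟩⟩⟩

lemma belowEdges_eq_of_tensor_mem {X : V} (hL : .tensor a b c ∈ Θ.links)
    (hX : X ∈ (MLLLink.tensor a b c).prems) : belowEdges Θ X = {s(X, c)} := by
  ext e
  constructor
  · rintro ⟨L, hLmem, hXL, c', hc', rfl⟩
    obtain rfl : L = .tensor a b c := Θ.prem_unique X L hLmem _ hL hXL hX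
    rw [MLLLink.concls, List.mem_singleton] at hc'
    rw [hc', Set.mem_singleton_iff]
  · rintro rfl
    exact ⟨_, hL, hX, c, List.mem_singleton_self c, rfl⟩

lemma empire_subset_reachable_of_tensor_mem (S : MLLLink V → Bool) {X : V}
    (hL : .tensor a b c ∈ Θ.links) (hX : X ∈ (MLLLink.tensor a b c).prems) :
    empire Θ X ⊆ {v | ((drGraph Θ S).deleteEdges {s(X, c)}).Reachable X v} := by
  rw [← belowEdges_eq_of_tensor_mem hL hX]
  exact Set.iInter_subset _ S

end

/-- In an MLL proof net, the empires of the two premises of a ⊗-link are disjoint. -/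
theorem tensor_empires_disjoint (Θ : MLLProofStructure V) (hΘ : IsProofNet Θ)
    (A B C : V) (hL : MLLLink.tensor A B C ∈ Θ.links) :
    empire Θ A ∩ empire Θ B = ∅ := by
  let S : MLLLink V → Bool := fun _ => true
  obtain ⟨hAC, hBC⟩ := drGraph_adj_of_tensor_mem S hL
  rw [← Set.disjoint_iff_inter_eq_empty]
  exact ((hΘ S).1.disjoint_reachable_deleteEdges hAC hBC (Θ.ne_of_tensor_mem hL).1).mono
    (empire_subset_reachable_of_tensor_mem S hL (by simp [MLLLink.prems]))
    (empire_subset_reachable_of_tensor_mem S hL (by simp [MLLLink.prems]))
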